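/- Comparison principle for ε-mean value solutions: let v_ε be the ε-mean value solution with boundary data F and w_ε the ε-mean value solution with boundary data G, where F and G are bounded Lipschitz functions on Γ_ε. If F ≤ G on Γ_ε, then v_ε ≤ w_ε in closure(Ω). -/

import Mathlib

open MeasureTheory Metric Set
open scoped ENNReal NNReal Classical

noncomputable section

abbrev EucN (N : ℕ) := EuclideanSpace ℝ (Fin N)

variable {N : ℕ}

/-- The directional mean value operator `M^ε_ξ v (x)`. -/
def mveOp (q ε : ℝ) (v : EucN N → ℝ) (ξ x : EucN N) : ℝ :=
  q * (⨍ y in ball x ε, v y) + (1 - q) * ((v (x + ε • ξ) + v (x - ε • ξ)) / 2)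

/-- The mean value operator `M^ε v (x) = sup_{|ξ|=1} M^ε_ξ v (x)`. -/
def mvOp (q ε : ℝ) (v : EucN N → ℝ) (x : EucN N) : ℝ :=
  ⨆ ξ : sphere (0 : EucN N) 1, mveOp q ε v (ξ : EucN N) x

/-- `Ω_ε = {x : dist(x,Ω) ≤ ε}`. -/
def Oeps (Ω : Set (EucN N)) (ε : ℝ) : Set (EucN N) := {x | Metric.infDist x Ω ≤ ε}

/-- `Γ_ε = Ω_ε \ closure Ω`. -/
def Geps (Ω : Set (EucN N)) (ε : ℝ) : Set (EucN N) := Oeps Ω ε \ closure Ω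

/-- `v` is an `ε`-mean value solution with boundary data `F`. -/
def IsMVS (q ε : ℝ) (Ω : Set (EucN N)) (F v : EucN N → ℝ) : Prop :=
  Measurable v ∧ (∃ C, ∀ x ∈ Oeps Ω ε, |v x| ≤ C) ∧ EqOn v F (Geps Ω ε) ∧
    LowerSemicontinuousOn v (closure Ω) ∧ ∀ x ∈ closure Ω, v x = mvOp q ε v x

/-- exterior corkscrew condition, satisfied by bounded Lipschitz domains -/
def Corkscrew (Ω : Set (EucN N)) (δbar μ : ℝ) : Prop :=
  ∀ δ, 0 < δ → δ < δbar → ∀ y ∈ frontier Ω, ∃ z, closedBall z (μ * δ) ⊆ ball y δ \ Ω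


/-!
Suppose `u = v - w` is positive somewhere in `closure Ω` and let `S > 0` be its supremum there.
Since `u ≤ 0` on `Γ_ε`, also `u ≤ S` on `Ω_ε`, and subtracting the two mean value equations
(a difference of sups is at most the sup of the differences) shows that `f = S - u ≥ 0` satisfies
`q ⨍_{B_ε(x)} f ≤ f(x)` on `closure Ω`. Hence `f(x) = 0` forces `f = 0` a.e. on `B_ε(x)`.
Compactness of `closure Ω` gives a ball on which `f = 0` a.e., and since a.e. point of that ball
is again a zero of `f`, the set of points near which `f = 0` a.e. is open and relatively closed
in the connected set `Ω`. It therefore reaches the boundary, where the exterior corkscrew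
condition provides a ball inside `Γ_ε` on which `f ≥ S > 0`: a contradiction.
-/

open Filter Topology

section Supermean

variable {X : Type*} [PseudoMetricSpace X] [MeasurableSpace X] [OpensMeasurableSpace X]
  {μ : Measure X} {ε C : ℝ} {K : Set X} {f : X → ℝ}

def NonnegSupermeanOn (μ : Measure X) (ε C : ℝ) (K : Set X) (f : X → ℝ) : Prop :=
  ∀ x ∈ K, (∀ y ∈ ball x ε, 0 ≤ f y) ∧ IntegrableOn f (ball x ε) μ ∧
    ∫ y in ball x ε, f y ∂μ ≤ C * f x

namespace NonnegSupermeanOn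

lemma ae_eq_zero_of_integral_nonpos (hf : NonnegSupermeanOn μ ε C K f) {x : X} (hx : x ∈ K)
    {r : ℝ} (hr : r ≤ ε) (hint : ∫ y in ball x r, f y ∂μ ≤ 0) :
    ∀ᵐ y ∂μ.restrict (ball x r), f y = 0 := by
  obtain ⟨hf0, hfi, -⟩ := hf x hx
  have hnonneg : 0 ≤ᵐ[μ.restrict (ball x r)] f :=
    ae_restrict_of_forall_mem measurableSet_ball fun y hy => hf0 y (ball_subset_ball hr hy)
  exact (setIntegral_eq_zero_iff_of_nonneg_ae hnonneg (hfi.mono_set (ball_subset_ball hr))).mp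
    (le_antisymm hint (integral_nonneg_of_ae hnonneg))

lemma ae_eq_zero_of_eq_zero (hf : NonnegSupermeanOn μ ε C K f) {x : X} (hx : x ∈ K)
    (hfx : f x = 0) : ∀ᵐ y ∂μ.restrict (ball x ε), f y = 0 :=
  hf.ae_eq_zero_of_integral_nonpos hx le_rfl (by simpa [hfx] using (hf x hx).2.2)

lemma exists_ae_eq_zero (hf : NonnegSupermeanOn μ ε C K f) (hε : 0 < ε) (hK : IsCompact K)
    {x : ℕ → X} (hxK : ∀ n, x n ∈ K) (hfx : Tendsto (f ∘ x) atTop (𝓝 0)) :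
    ∃ x₀ ∈ K, ∀ᵐ y ∂μ.restrict (ball x₀ (ε / 2)), f y = 0 := by
  obtain ⟨x₀, hx₀K, φ, hφ, hlim⟩ := hK.tendsto_subseq hxK
  refine ⟨x₀, hx₀K, hf.ae_eq_zero_of_integral_nonpos hx₀K (half_le_self hε.le) ?_⟩
  have hbound : ∀ᶠ n in atTop, ∫ y in ball x₀ (ε / 2), f y ∂μ ≤ C * f (x (φ n)) := by
    filter_upwards [Metric.tendsto_nhds.mp hlim (ε / 2) (half_pos hε)] with n hn
    have hsub : ball x₀ (ε / 2) ⊆ ball (x (φ n)) ε :=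
      ball_subset_ball' (by rw [dist_comm]; simp only [Function.comp_apply] at hn; linarith)
    obtain ⟨hf0, hfi, hle⟩ := hf _ (hxK (φ n))
    exact (setIntegral_mono_set hfi (ae_restrict_of_forall_mem measurableSet_ball hf0)
      hsub.eventuallyLE).trans hle
  have hlimC : Tendsto (fun n => C * f (x (φ n))) atTop (𝓝 0) := by
    simpa using (hfx.comp hφ.tendsto_atTop).const_mul C
  exact ge_of_tendsto hlimC hbound

lemma ae_eq_zero_on_ball_half (hf : NonnegSupermeanOn μ ε C K f) [μ.IsOpenPosMeasure]
    (hε : 0 < ε) {s : Set X} (hs : IsOpen s) (hsK : s ⊆ K) {a : X} (ha : a ∈ closure s)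
    {r : ℝ} (hr : 0 < r) (h : ∀ᵐ y ∂μ.restrict (ball a r), f y = 0) :
    ∀ᵐ y ∂μ.restrict (ball a (ε / 2)), f y = 0 := by
  have hne : (ball a (min r (ε / 2)) ∩ s).Nonempty :=
    mem_closure_iff.mp ha _ isOpen_ball (mem_ball_self (lt_min hr (half_pos hε)))
  obtain ⟨z, ⟨hzball, hzs⟩, hfz⟩ := Measure.exists_mem_of_measure_ne_zero_of_ae
    ((isOpen_ball.inter hs).measure_ne_zero μ hne)
    (ae_restrict_of_ae_restrict_of_subset
      (inter_subset_left.trans (ball_subset_ball (min_le_left _ _))) h)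
  have hza : dist a z < ε / 2 := by
    rw [dist_comm]; exact (mem_ball.mp hzball).trans_le (min_le_right _ _)
  exact ae_restrict_of_ae_restrict_of_subset (ball_subset_ball' (by linarith))
    (hf.ae_eq_zero_of_eq_zero (hsK hzs) hfz)

lemma ae_eq_zero_near_closure (hf : NonnegSupermeanOn μ ε C K f) [μ.IsOpenPosMeasure]
    (hε : 0 < ε) {s : Set X} (hs : IsOpen s) (hsc : IsPreconnected s) (hsK : s ⊆ K)
    {a₀ : X} (ha₀ : a₀ ∈ closure s) {r₀ : ℝ} (hr₀ : 0 < r₀)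
    (h₀ : ∀ᵐ y ∂μ.restrict (ball a₀ r₀), f y = 0) {a : X} (ha : a ∈ closure s) :
    ∀ᵐ y ∂μ.restrict (ball a (ε / 4)), f y = 0 := by
  set Z := {x | ∃ r > 0, ∀ᵐ y ∂μ.restrict (ball x r), f y = 0}
  have hZ : IsOpen Z := by
    refine Metric.isOpen_iff.mpr fun x ⟨r, hr, hx⟩ => ⟨r / 2, half_pos hr, fun x' hx' => ?_⟩
    exact ⟨r / 2, half_pos hr, ae_restrict_of_ae_restrict_of_subset
      (ball_subset_ball' (by rw [mem_ball] at hx'; linarith)) hx⟩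
  have hspread : ∀ b ∈ Z ∩ s, ∀ c, dist c b < ε / 4 →
      ∀ᵐ y ∂μ.restrict (ball c (ε / 4)), f y = 0 := by
    rintro b ⟨⟨r, hr, hb⟩, hbs⟩ c hcb
    exact ae_restrict_of_ae_restrict_of_subset (ball_subset_ball' (by linarith))
      (hf.ae_eq_zero_on_ball_half hε hs hsK (subset_closure hbs) hr hb)
  have hsZ : s ⊆ Z := by
    refine hsc.subset_of_closure_inter_subset hZ ?_ fun y ⟨hyZ, hys⟩ => ?_
    · rw [inter_comm]
      exact mem_closure_iff.mp ha₀ Z hZ ⟨r₀, hr₀, h₀⟩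
    · obtain ⟨b, ⟨hby, hbs⟩, hbZ⟩ := mem_closure_iff.mp hyZ (ball y (ε / 4) ∩ s)
        (isOpen_ball.inter hs) ⟨mem_ball_self (by positivity), hys⟩
      exact ⟨ε / 4, by positivity, hspread b ⟨hbZ, hbs⟩ y (by rw [dist_comm]; exact hby)⟩
  obtain ⟨b, hba, hbs⟩ :=
    mem_closure_iff.mp ha (ball a (ε / 4)) isOpen_ball (mem_ball_self (by positivity))
  exact hspread b ⟨hsZ hbs, hbs⟩ a (by rw [dist_comm]; exact hba)

lemma ae_eq_zero_near_closure_of_tendsto {s : Set X} (hf : NonnegSupermeanOn μ ε C (closure s) f)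
    [μ.IsOpenPosMeasure] (hε : 0 < ε) (hs : IsOpen s) (hsc : IsPreconnected s)
    (hK : IsCompact (closure s)) {x : ℕ → X} (hxK : ∀ n, x n ∈ closure s)
    (hfx : Tendsto (f ∘ x) atTop (𝓝 0)) :
    ∀ a ∈ closure s, ∀ᵐ y ∂μ.restrict (ball a (ε / 4)), f y = 0 := by
  obtain ⟨x₀, hx₀, h₀⟩ := hf.exists_ae_eq_zero hε hK hxK hfx
  exact fun a ha => hf.ae_eq_zero_near_closure hε hs hsc subset_closure hx₀ (half_pos hε) h₀ ha

end NonnegSupermeanOn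

end Supermean

section MeanValueSolutions

variable {q ε S : ℝ} {Ω : Set (EucN N)} {F G v w : EucN N → ℝ} {x : EucN N}

lemma closedBall_subset_Oeps (hx : x ∈ closure Ω) : closedBall x ε ⊆ Oeps Ω ε := fun y hy => by
  have h := infDist_le_infDist_add_dist (s := Ω) (x := y) (y := x)
  rw [infDist_zero_of_mem_closure hx, zero_add] at h
  exact h.trans (mem_closedBall.mp hy)

lemma Corkscrew.exists_ball_subset_Geps {δbar μ : ℝ} (hΩ : Corkscrew Ω δbar μ) (hN : 0 < N)
    (hne : Ω.Nonempty) (hb : Bornology.IsBounded Ω) (hδbar : 0 < δbar) (hμ : 0 < μ) {r : ℝ}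
    (hr : 0 < r) (hrε : r ≤ ε) :
    ∃ y ∈ closure Ω, ∃ z, ∃ ρ > 0, ball z ρ ⊆ ball y r ∩ Geps Ω ε := by
  have : Nonempty (Fin N) := ⟨⟨0, hN⟩⟩
  obtain ⟨y, hy⟩ : (frontier Ω).Nonempty := nonempty_frontier_iff.mpr
    ⟨hne, fun h => NormedSpace.unbounded_univ ℝ (EucN N) (h ▸ hb)⟩
  have hδ : 0 < min r (δbar / 2) := lt_min hr (half_pos hδbar)
  obtain ⟨z, hz⟩ := hΩ _ hδ ((min_le_right _ _).trans_lt (half_lt_self hδbar)) y hy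
  refine ⟨y, frontier_subset_closure hy, z, μ * min r (δbar / 2), mul_pos hμ hδ, fun p hp => ?_⟩
  have hpy : p ∈ ball y r := ball_subset_ball (min_le_left _ _) (hz (ball_subset_closedBall hp)).1
  have hpΩ : p ∉ closure Ω := by
    rw [← mem_compl_iff, ← interior_compl]
    exact interior_mono (fun a ha => (hz ha).2) (ball_subset_interior_closedBall hp)
  exact ⟨hpy, closedBall_subset_Oeps (frontier_subset_closure hy)
    (ball_subset_closedBall (ball_subset_ball hrε hpy)), hpΩ⟩

lemma add_smul_mem_Oeps_and_sub_smul_mem_Oeps (hε : 0 ≤ ε) (hx : x ∈ closure Ω)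
    (ξ : sphere (0 : EucN N) 1) :
    x + ε • (ξ : EucN N) ∈ Oeps Ω ε ∧ x - ε • (ξ : EucN N) ∈ Oeps Ω ε := by
  have hnorm : ‖ε • (ξ : EucN N)‖ = ε := by
    rw [norm_smul, mem_sphere_zero_iff_norm.mp ξ.2, mul_one, Real.norm_of_nonneg hε]
  exact ⟨closedBall_subset_Oeps hx (by rw [mem_closedBall, dist_self_add_left, hnorm]),
    closedBall_subset_Oeps hx (by rw [mem_closedBall, dist_self_sub_left, hnorm])⟩

lemma IsMVS.integrableOn_ball (hv : IsMVS q ε Ω F v) (hx : x ∈ closure Ω) :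
    IntegrableOn v (ball x ε) := by
  obtain ⟨hvm, ⟨C, hC⟩, -⟩ := hv
  refine Measure.integrableOn_of_bounded measure_ball_lt_top.ne hvm.aestronglyMeasurable
    (M := C) (ae_restrict_of_forall_mem measurableSet_ball fun y hy => ?_)
  exact hC y (closedBall_subset_Oeps hx (ball_subset_closedBall hy))

lemma IsMVS.bddAbove_mveOp (hv : IsMVS q ε Ω F v) (hq1 : q ≤ 1) (hε : 0 ≤ ε)
    (hx : x ∈ closure Ω) :
    BddAbove (range fun ξ : sphere (0 : EucN N) 1 => mveOp q ε v ξ x) := by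
  obtain ⟨-, ⟨C, hC⟩, -⟩ := hv
  refine ⟨q * (⨍ y in ball x ε, v y) + (1 - q) * C, ?_⟩
  rintro _ ⟨ξ, rfl⟩
  obtain ⟨hadd, hsub⟩ := add_smul_mem_Oeps_and_sub_smul_mem_Oeps hε hx ξ
  have hmid : (v (x + ε • (ξ : EucN N)) + v (x - ε • (ξ : EucN N))) / 2 ≤ C := by
    linarith [(abs_le.mp (hC _ hadd)).2, (abs_le.mp (hC _ hsub)).2]
  simp only [mveOp]
  linarith [mul_le_mul_of_nonneg_left hmid (sub_nonneg.mpr hq1)]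

lemma mvOp_le_mvOp_add (hN : 0 < N)
    (hw : BddAbove (range fun ξ : sphere (0 : EucN N) 1 => mveOp q ε w ξ x)) {c : ℝ}
    (h : ∀ ξ : sphere (0 : EucN N) 1, mveOp q ε v ξ x ≤ mveOp q ε w ξ x + c) :
    mvOp q ε v x ≤ mvOp q ε w x + c := by
  have : Nonempty (Fin N) := ⟨⟨0, hN⟩⟩
  have : Nonempty (sphere (0 : EucN N) 1) :=
    (NormedSpace.sphere_nonempty.mpr zero_le_one).to_subtype
  exact ciSup_le fun ξ => (h ξ).trans (add_le_add_left (le_ciSup hw ξ) c)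

lemma IsMVS.bddAbove_image_sub (hv : IsMVS q ε Ω F v) (hw : IsMVS q ε Ω G w) (hε : 0 ≤ ε) :
    BddAbove ((fun y => v y - w y) '' closure Ω) := by
  obtain ⟨-, ⟨Cv, hCv⟩, -⟩ := hv
  obtain ⟨-, ⟨Cw, hCw⟩, -⟩ := hw
  refine ⟨Cv + Cw, forall_mem_image.mpr fun y hy => ?_⟩
  have hy' := closedBall_subset_Oeps hy (mem_closedBall_self hε)
  linarith [(abs_le.mp (hCv y hy')).2, (abs_le.mp (hCw y hy')).1]

lemma IsMVS.sub_nonpos_on_Geps (hv : IsMVS q ε Ω F v) (hw : IsMVS q ε Ω G w)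
    (hFG : ∀ y ∈ Geps Ω ε, F y ≤ G y) : ∀ y ∈ Geps Ω ε, v y - w y ≤ 0 := fun y hy => by
  obtain ⟨-, -, hvF, -⟩ := hv
  obtain ⟨-, -, hwG, -⟩ := hw
  rw [hvF hy, hwG hy, sub_nonpos]
  exact hFG y hy

lemma IsMVS.sub_le_average_sub (hv : IsMVS q ε Ω F v) (hw : IsMVS q ε Ω G w) (hN : 0 < N)
    (hε : 0 ≤ ε) (hq1 : q ≤ 1) (hS : ∀ y ∈ Oeps Ω ε, v y - w y ≤ S) (hx : x ∈ closure Ω) :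
    v x - w x ≤ q * ((⨍ y in ball x ε, v y) - ⨍ y in ball x ε, w y) + (1 - q) * S := by
  have hsup := mvOp_le_mvOp_add (v := v) hN (hw.bddAbove_mveOp hq1 hε hx)
    (c := q * ((⨍ y in ball x ε, v y) - ⨍ y in ball x ε, w y) + (1 - q) * S) fun ξ => by
      obtain ⟨hadd, hsub⟩ := add_smul_mem_Oeps_and_sub_smul_mem_Oeps hε hx ξ
      have hpair := mul_le_mul_of_nonneg_left (add_le_add (hS _ hadd) (hS _ hsub))
        (sub_nonneg.mpr hq1)
      simp only [mveOp]
      linarith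
  obtain ⟨-, -, -, -, hveq⟩ := hv
  obtain ⟨-, -, -, -, hweq⟩ := hw
  linarith [hveq x hx, hweq x hx]

lemma IsMVS.nonnegSupermeanOn (hv : IsMVS q ε Ω F v) (hw : IsMVS q ε Ω G w) (hN : 0 < N)
    (hε : 0 < ε) (hq0 : 0 < q) (hq1 : q ≤ 1) (hS : ∀ y ∈ Oeps Ω ε, v y - w y ≤ S) :
    NonnegSupermeanOn volume ε (volume.real (ball (0 : EucN N) ε) / q) (closure Ω)
      fun y => S - (v y - w y) := by
  intro x hx
  have hB : ball x ε ⊆ Oeps Ω ε := ball_subset_closedBall.trans (closedBall_subset_Oeps hx)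
  have hvi := hv.integrableOn_ball hx
  have hwi := hw.integrableOn_ball hx
  have hV : volume.real (ball x ε) = volume.real (ball (0 : EucN N) ε) := by
    simp only [measureReal_def, Measure.addHaar_ball_center]
  have hVpos : 0 < volume.real (ball x ε) :=
    ENNReal.toReal_pos (measure_ball_pos _ _ hε).ne' measure_ball_lt_top.ne
  have hci : IntegrableOn (fun _ => S) (ball x ε) := integrableOn_const measure_ball_lt_top.ne
  have hui : IntegrableOn (fun y => v y - w y) (ball x ε) := hvi.sub hwi
  refine ⟨fun y hy => sub_nonneg.mpr (hS y (hB hy)), hci.sub hui, ?_⟩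
  have hmain := hv.sub_le_average_sub hw hN hε.le hq1 hS hx
  rw [setAverage_eq, setAverage_eq, smul_eq_mul, smul_eq_mul] at hmain
  show ∫ y in ball x ε, (S - (v y - w y)) ≤ _ / q * (S - (v x - w x))
  rw [integral_sub hci hui, integral_sub hvi hwi, setIntegral_const, smul_eq_mul,
    ← hV, div_mul_eq_mul_div, le_div_iff₀ hq0]
  set V := volume.real (ball x ε)
  have hscale : V * (q * (V⁻¹ * (∫ y in ball x ε, v y) - V⁻¹ * ∫ y in ball x ε, w y))
      = q * ((∫ y in ball x ε, v y) - ∫ y in ball x ε, w y) := by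
    field_simp
  linear_combination mul_le_mul_of_nonneg_left hmain hVpos.le + hscale

end MeanValueSolutions

theorem mvs_comparison_general (hN : 2 ≤ N) (p q ε : ℝ) (hp : 2 ≤ p)
    (hq : q = ((N : ℝ) + 2) / ((N : ℝ) + p)) (hε : 0 < ε)
    (Ω : Set (EucN N)) (hΩo : IsOpen Ω) (hΩb : Bornology.IsBounded Ω)
    (hΩc : IsConnected Ω) (δbar μ : ℝ) (hδbar : 0 < δbar) (hμ : μ ∈ Ioo (0 : ℝ) 1)
    (hΩlip : Corkscrew Ω δbar μ)
    (F G : EucN N → ℝ)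
    (v w : EucN N → ℝ) (hv : IsMVS q ε Ω F v) (hw : IsMVS q ε Ω G w)
    (hFG : ∀ x ∈ Geps Ω ε, F x ≤ G x) :
    ∀ x ∈ closure Ω, v x ≤ w x := by
  have hN0 : 0 < N := by omega
  have hNp : (0 : ℝ) < N + p := by positivity
  have hq0 : 0 < q := hq ▸ div_pos (by positivity) hNp
  have hq1 : q ≤ 1 := hq ▸ (div_le_one hNp).mpr (by linarith)
  by_contra! hneg
  obtain ⟨x₁, hx₁, hwv⟩ := hneg
  set u := fun y => v y - w y
  set S := sSup (u '' closure Ω)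
  have hbdd := hv.bddAbove_image_sub hw hε.le
  have hSpos : 0 < S := (sub_pos.mpr hwv).trans_le (le_csSup hbdd (mem_image_of_mem u hx₁))
  have hbdry := hv.sub_nonpos_on_Geps hw hFG
  have hS : ∀ y ∈ Oeps Ω ε, u y ≤ S := fun y hy => by
    by_cases hyc : y ∈ closure Ω
    · exact le_csSup hbdd (mem_image_of_mem u hyc)
    · exact (hbdry y ⟨hy, hyc⟩).trans hSpos.le
  obtain ⟨uₙ, -, huₙ, huₙS⟩ := exists_seq_tendsto_sSup ⟨_, mem_image_of_mem u hx₁⟩ hbdd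
  choose xₙ hxₙ hxₙu using huₙS
  have hlim : Tendsto (fun n => S - u (xₙ n)) atTop (𝓝 0) := by
    simpa [hxₙu, S] using (tendsto_const_nhds (x := S)).sub huₙ
  have hzero := (hv.nonnegSupermeanOn hw hN0 hε hq0 hq1 hS).ae_eq_zero_near_closure_of_tendsto
    hε hΩo hΩc.isPreconnected hΩb.isCompact_closure hxₙ hlim
  obtain ⟨y₀, hy₀, z, ρ, hρ, hzρ⟩ := hΩlip.exists_ball_subset_Geps hN0 hΩc.nonempty hΩb hδbar
    hμ.1 (ε := ε) (r := ε / 4) (by positivity) (by linarith)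
  obtain ⟨y, hy, hfy⟩ := Measure.exists_mem_of_measure_ne_zero_of_ae
    (measure_ball_pos volume z hρ).ne'
    (ae_restrict_of_ae_restrict_of_subset (hzρ.trans inter_subset_left) (hzero y₀ hy₀))
  linarith [hbdry y (hzρ hy).2]

/-- comparison principle for ε-mean value solutions: if `F ≤ G` on `Γ_ε`
then `v_ε ≤ w_ε` in `closure Ω`. -/
theorem mvs_comparison (hN : 2 ≤ N) (p q ε : ℝ) (hp : 2 ≤ p)
    (hq : q = ((N : ℝ) + 2) / ((N : ℝ) + p)) (hε : 0 < ε)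
    (Ω : Set (EucN N)) (hΩo : IsOpen Ω) (hΩb : Bornology.IsBounded Ω)
    (hΩc : IsConnected Ω) (δbar μ : ℝ) (hδbar : 0 < δbar) (hμ : μ ∈ Ioo (0 : ℝ) 1)
    (hΩlip : Corkscrew Ω δbar μ)
    (F G : EucN N → ℝ) (KF KG : ℝ≥0)
    (hF : LipschitzOnWith KF F (Geps Ω ε)) (hFb : ∃ C, ∀ x ∈ Geps Ω ε, |F x| ≤ C)
    (hG : LipschitzOnWith KG G (Geps Ω ε)) (hGb : ∃ C, ∀ x ∈ Geps Ω ε, |G x| ≤ C)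
    (v w : EucN N → ℝ) (hv : IsMVS q ε Ω F v) (hw : IsMVS q ε Ω G w)
    (hFG : ∀ x ∈ Geps Ω ε, F x ≤ G x) :
    ∀ x ∈ closure Ω, v x ≤ w x :=
  mvs_comparison_general hN p q ε hp hq hε Ω hΩo hΩb hΩc δbar μ hδbar hμ hΩlip F G v w hv hw hFG

end
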